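/- Under the Cutting spheres algorithm hypotheses, if the problem of minimizing ‖x − z‖² over A has a unique solution x̂, then the generated sequence (x_k)_{k∈ℕ} converges to x̂. -/

import Mathlib

open scoped RealInnerProductSpace
open Filter Topology Metric

/-!
Every iterate minimizes `J` over `O_k ⊇ A`, so `‖x_k - z‖ ≤ ‖x̂ - z‖` and the sequence stays in a
compact ball. On a neighbourhood of that ball the convex functions `f_i + a_i ‖·‖²` are bounded,
hence so are their subgradients `b_i^k`, and the cut made at step `k` (which every later iterate
satisfies) gives `f_i(x_k) ≤ L ‖x_l - x_k‖` for all `l > k`. Passing to the limit along a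
convergent subsequence shows that every cluster point is feasible; being no farther from `z`
than `x̂`, it is the unique solution `x̂`.
-/

theorem sq_norm_sub_sq_norm_le {E : Type*} [SeminormedAddCommGroup E] {x y : E} {r : ℝ}
    (hx : ‖x‖ ≤ r) (hy : ‖y‖ ≤ r) : ‖x‖ ^ 2 - ‖y‖ ^ 2 ≤ 2 * r * ‖x - y‖ := by
  nlinarith [norm_sub_norm_le x y, norm_nonneg x, norm_nonneg y, norm_nonneg (x - y)]

section Analysis

variable {E : Type*} [NormedAddCommGroup E] [InnerProductSpace ℝ E]

theorem norm_le_of_forall_add_inner_le {g : E → ℝ} {x b : E} {M : ℝ}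
    (hb : ∀ y, g x + ⟪b, y - x⟫ ≤ g y) (hM : ∀ y ∈ closedBall x 1, g y - g x ≤ M) :
    ‖b‖ ≤ M := by
  rcases eq_or_ne b 0 with rfl | hb0
  · simpa using hM x (mem_closedBall_self zero_le_one)
  have hu : ‖‖b‖⁻¹ • b‖ = 1 := norm_smul_inv_norm hb0
  have hinner : ⟪b, x + ‖b‖⁻¹ • b - x⟫ = ‖b‖ := by
    rw [add_sub_cancel_left, real_inner_smul_right, real_inner_self_eq_norm_sq]
    field_simp
  have hsub := hb (x + ‖b‖⁻¹ • b)
  have hbound := hM (x + ‖b‖⁻¹ • b) (by simp [hu])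
  linarith

theorem mul_sq_norm_sub_add_inner_le_mul_dist {a M r : ℝ} {b x y : E} (ha : 0 ≤ a)
    (hb : ‖b‖ ≤ M) (hx : ‖x‖ ≤ r) (hy : ‖y‖ ≤ r) :
    a * (‖y‖ ^ 2 - ‖x‖ ^ 2) + ⟪b, x - y⟫ ≤ (2 * a * r + M) * dist y x := by
  have hsq : a * (‖y‖ ^ 2 - ‖x‖ ^ 2) ≤ a * (2 * r * dist y x) := by
    rw [dist_eq_norm]
    exact mul_le_mul_of_nonneg_left (sq_norm_sub_sq_norm_le hy hx) ha
  have hinner : ⟪b, x - y⟫ ≤ M * dist y x := by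
    calc ⟪b, x - y⟫ ≤ ‖b‖ * ‖x - y‖ := real_inner_le_norm _ _
      _ ≤ M * dist y x := by rw [dist_eq_norm']; gcongr
  linarith

end Analysis

theorem MapClusterPt.nonpos_of_le_mul_dist {α : Type*} [PseudoMetricSpace α] {x : ℕ → α} {p : α}
    {g : α → ℝ} {L : ℝ} (hp : MapClusterPt p atTop x) (hg : ContinuousAt g p)
    (h : ∀ k l, k < l → g (x k) ≤ L * dist (x l) (x k)) : g p ≤ 0 := by
  obtain ⟨ψ, hψ, hlim⟩ := hp.tendsto_subseq
  have hsub : ∀ j, g (x (ψ j)) ≤ L * dist p (x (ψ j)) := fun j =>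
    ge_of_tendsto (tendsto_const_nhds.mul (hlim.dist tendsto_const_nhds))
      (eventually_atTop.2 ⟨j + 1, fun _ hj => h _ _ (hψ (by omega))⟩)
  simpa using le_of_tendsto_of_tendsto' (hg.tendsto.comp hlim)
    (tendsto_const_nhds.mul (tendsto_const_nhds.dist hlim)) hsub

namespace CuttingSpheres

variable {ι E : Type*} [NormedAddCommGroup E] [InnerProductSpace ℝ E]

/-- The sets are shifted by one: `O (k + 1)` is the paper's `O_k`, and `O 0` its `O_{-1}`. -/
def Step (f : ι → E → ℝ) (a : ι → ℝ) (J : E → ℝ) (x : ℕ → E) (O : ℕ → Set E)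
    (b : ℕ → ι → E) (k : ℕ) : Prop :=
  ({i | 0 < f i (x k)}.Nonempty →
    (∀ i, 0 < f i (x k) → ∀ y,
      f i (x k) + a i * ‖x k‖ ^ 2 + ⟪b k i, y - x k⟫ ≤ f i y + a i * ‖y‖ ^ 2) ∧
    O (k + 1) = O k ∩ {y | ∀ i, 0 < f i (x k) →
      -(a i) * ‖y‖ ^ 2 + ⟪b k i, y⟫ + a i * ‖x k‖ ^ 2 - ⟪b k i, x k⟫ + f i (x k) ≤ 0} ∧
    x (k + 1) ∈ O (k + 1) ∧ ∀ y ∈ O (k + 1), J (x (k + 1)) ≤ J y) ∧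
  (¬ {i | 0 < f i (x k)}.Nonempty → O (k + 1) = O k ∧ x (k + 1) = x k)

variable {f : ι → E → ℝ} {a : ι → ℝ} {J : E → ℝ} {x : ℕ → E} {O : ℕ → Set E}
  {b : ℕ → ι → E} {k : ℕ}

theorem Step.subset (h : Step f a J x O b k) : O (k + 1) ⊆ O k := by
  by_cases hne : {i | 0 < f i (x k)}.Nonempty
  · rw [(h.1 hne).2.1]
    exact Set.inter_subset_left
  · rw [(h.2 hne).1]

theorem Step.feasible_subset (h : Step f a J x O b k) (hA : {y | ∀ i, f i y ≤ 0} ⊆ O k) :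
    {y | ∀ i, f i y ≤ 0} ⊆ O (k + 1) := by
  by_cases hne : {i | 0 < f i (x k)}.Nonempty
  · obtain ⟨hsub, hO, -, -⟩ := h.1 hne
    rw [hO]
    refine fun y hy => ⟨hA hy, fun i hi => ?_⟩
    have hlin := hsub i hi y
    rw [inner_sub_right] at hlin
    linarith [hy i]
  · rw [(h.2 hne).1]
    exact hA

theorem Step.mem_isMinOn (h : Step f a J x O b k) (hk : x k ∈ O k ∧ IsMinOn J (O k) (x k)) :
    x (k + 1) ∈ O (k + 1) ∧ IsMinOn J (O (k + 1)) (x (k + 1)) := by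
  by_cases hne : {i | 0 < f i (x k)}.Nonempty
  · obtain ⟨-, -, hmem, hmin⟩ := h.1 hne
    exact ⟨hmem, isMinOn_iff.2 hmin⟩
  · obtain ⟨hO, hx⟩ := h.2 hne
    rw [hO, hx]
    exact hk

theorem Step.le_of_mem (h : Step f a J x O b k) {i : ι} (hi : 0 < f i (x k)) {y : E}
    (hy : y ∈ O (k + 1)) : f i (x k) ≤ a i * (‖y‖ ^ 2 - ‖x k‖ ^ 2) + ⟪b k i, x k - y⟫ := by
  rw [(h.1 ⟨i, hi⟩).2.1] at hy
  have hcut := hy.2 i hi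
  rw [inner_sub_right]
  linarith

theorem feasible_subset (hstep : ∀ k, Step f a J x O b k) (hO0 : O 0 = Set.univ) (k : ℕ) :
    {y | ∀ i, f i y ≤ 0} ⊆ O k := by
  induction k with
  | zero => simp [hO0]
  | succ k ih => exact (hstep k).feasible_subset ih

theorem mem_isMinOn (hstep : ∀ k, Step f a J x O b k)
    (h0 : x 0 ∈ O 0 ∧ IsMinOn J (O 0) (x 0)) (k : ℕ) : x k ∈ O k ∧ IsMinOn J (O k) (x k) := by
  induction k with
  | zero => exact h0
  | succ k ih => exact (hstep k).mem_isMinOn ih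

theorem exists_le_mul_dist [ProperSpace E] (hstep : ∀ k, Step f a J x O b k)
    (hxO : ∀ k, x k ∈ O k) {z : E} {R : ℝ} (hball : ∀ k, x k ∈ closedBall z R) (i : ι)
    (ha : 0 ≤ a i) (hg : Continuous fun y => f i y + a i * ‖y‖ ^ 2) :
    ∃ L, ∀ k l, k < l → f i (x k) ≤ L * dist (x l) (x k) := by
  obtain ⟨B, hB⟩ :=
    (isCompact_closedBall z (R + 1)).exists_bound_of_continuousOn hg.continuousOn
  have hnear : ∀ k, ∀ y ∈ closedBall (x k) 1, y ∈ closedBall z (R + 1) := fun k =>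
    closedBall_subset_closedBall' (by linarith [mem_closedBall.1 (hball k)])
  have hxk : ∀ k, x k ∈ closedBall z (R + 1) := fun k =>
    hnear k _ (mem_closedBall_self zero_le_one)
  have hb : ∀ k, 0 < f i (x k) → ‖b k i‖ ≤ 2 * B := fun k hi =>
    norm_le_of_forall_add_inner_le (g := fun y => f i y + a i * ‖y‖ ^ 2)
      (((hstep k).1 ⟨i, hi⟩).1 i hi) fun y hy => by
        have hy := hB y (hnear k y hy)
        have hx := hB (x k) (hxk k)
        rw [Real.norm_eq_abs, abs_le] at hx hy
        linarith
  have hnorm : ∀ k, ‖x k‖ ≤ ‖z‖ + R := fun k => norm_le_of_mem_closedBall (hball k)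
  have hR : 0 ≤ ‖z‖ + R := (norm_nonneg _).trans (hnorm 0)
  have hB0 : 0 ≤ B := (norm_nonneg _).trans (hB _ (hxk 0))
  refine ⟨2 * a i * (‖z‖ + R) + 2 * B, fun k l hkl => ?_⟩
  by_cases hi : 0 < f i (x k)
  · have hl : x l ∈ O (k + 1) := antitone_nat_of_succ_le (fun k => (hstep k).subset) hkl (hxO l)
    exact ((hstep k).le_of_mem hi hl).trans
      (mul_sq_norm_sub_add_inner_le_mul_dist ha (hb k hi) (hnorm k) (hnorm l))
  · exact (not_lt.1 hi).trans (by positivity)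

end CuttingSpheres

theorem stmt9_general (n m : ℕ)
    (f : Fin m → EuclideanSpace ℝ (Fin n) → ℝ) (a : Fin m → ℝ) (ha : ∀ i, 0 ≤ a i)
    (hconv : ∀ i, ConvexOn ℝ Set.univ fun x => f i x + a i * ‖x‖ ^ 2)
    (z : EuclideanSpace ℝ (Fin n)) (J : EuclideanSpace ℝ (Fin n) → ℝ)
    (hJ : ∀ x, J x = ‖x - z‖ ^ 2)
    (A : Set (EuclideanSpace ℝ (Fin n))) (hA : A = {x | ∀ i, f i x ≤ 0})
    (x : ℕ → EuclideanSpace ℝ (Fin n)) (O : ℕ → Set (EuclideanSpace ℝ (Fin n)))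
    (b : ℕ → Fin m → EuclideanSpace ℝ (Fin n))
    (hx0 : x 0 = z) (hO0 : O 0 = Set.univ)
    (hstep : ∀ k : ℕ,
      ({i : Fin m | 0 < f i (x k)}.Nonempty →
        (∀ i, 0 < f i (x k) → ∀ y,
          f i (x k) + a i * ‖x k‖ ^ 2 + ⟪b k i, y - x k⟫ ≤ f i y + a i * ‖y‖ ^ 2) ∧
        O (k + 1) = O k ∩ {y | ∀ i, 0 < f i (x k) →
          -(a i) * ‖y‖ ^ 2 + ⟪b k i, y⟫ + a i * ‖x k‖ ^ 2 - ⟪b k i, x k⟫ + f i (x k) ≤ 0} ∧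
        x (k + 1) ∈ O (k + 1) ∧ ∀ y ∈ O (k + 1), J (x (k + 1)) ≤ J y) ∧
      (¬ {i : Fin m | 0 < f i (x k)}.Nonempty →
        O (k + 1) = O k ∧ x (k + 1) = x k))
    (xhat : EuclideanSpace ℝ (Fin n))
    (huniq : xhat ∈ A ∧ (∀ y ∈ A, J xhat ≤ J y) ∧
      ∀ w, w ∈ A → (∀ y ∈ A, J w ≤ J y) → w = xhat) :
    Tendsto x atTop (𝓝 xhat) := by
  subst hA
  have hg : ∀ i, Continuous fun y => f i y + a i * ‖y‖ ^ 2 := fun i =>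
    continuousOn_univ.1 ((hconv i).continuousOn isOpen_univ)
  have hf : ∀ i, Continuous (f i) := fun i =>
    ((hg i).sub (by fun_prop : Continuous fun y => a i * ‖y‖ ^ 2)).congr fun y =>
      add_sub_cancel_right (f i y) _
  have hJball : ∀ y, J y ≤ J xhat ↔ y ∈ closedBall z ‖xhat - z‖ := fun y => by
    rw [hJ, hJ, mem_closedBall, dist_eq_norm, sq_le_sq₀ (norm_nonneg _) (norm_nonneg _)]
  have hmin := CuttingSpheres.mem_isMinOn hstep
    ⟨by simp [hO0], isMinOn_iff.2 fun y _ => by simp [hJ, hx0]⟩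
  have hball : ∀ k, x k ∈ closedBall z ‖xhat - z‖ := fun k =>
    (hJball _).1 ((hmin k).2 (CuttingSpheres.feasible_subset hstep hO0 k huniq.1))
  refine (isCompact_closedBall z _).tendsto_nhds_of_unique_mapClusterPt
    (Eventually.of_forall hball) fun p hp hcluster => huniq.2.2 p (fun i => ?_)
      fun y hy => ((hJball p).2 hp).trans (huniq.2.1 y hy)
  obtain ⟨L, hL⟩ := CuttingSpheres.exists_le_mul_dist hstep (fun k => (hmin k).1) hball i (ha i)
    (hg i)
  exact hcluster.nonpos_of_le_mul_dist (hf i).continuousAt hL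

/-- If the problem has a unique solution, the Cutting spheres sequence converges to it. -/
theorem stmt9 (n m : ℕ) (hm : 1 ≤ m)
    (f : Fin m → EuclideanSpace ℝ (Fin n) → ℝ) (a : Fin m → ℝ) (ha : ∀ i, 0 ≤ a i)
    (hconv : ∀ i, ConvexOn ℝ Set.univ fun x => f i x + a i * ‖x‖ ^ 2)
    (z : EuclideanSpace ℝ (Fin n)) (J : EuclideanSpace ℝ (Fin n) → ℝ)
    (hJ : ∀ x, J x = ‖x - z‖ ^ 2)
    (A : Set (EuclideanSpace ℝ (Fin n))) (hA : A = {x | ∀ i, f i x ≤ 0}) (hAne : A.Nonempty)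
    (Jstar : ℝ) (hJstar : Jstar = ⨅ x : A, J x)
    (x : ℕ → EuclideanSpace ℝ (Fin n)) (O : ℕ → Set (EuclideanSpace ℝ (Fin n)))
    (b : ℕ → Fin m → EuclideanSpace ℝ (Fin n))
    (hx0 : x 0 = z) (hO0 : O 0 = Set.univ)
    (hstep : ∀ k : ℕ,
      ({i : Fin m | 0 < f i (x k)}.Nonempty →
        (∀ i, 0 < f i (x k) → ∀ y,
          f i (x k) + a i * ‖x k‖ ^ 2 + ⟪b k i, y - x k⟫ ≤ f i y + a i * ‖y‖ ^ 2) ∧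
        O (k + 1) = O k ∩ {y | ∀ i, 0 < f i (x k) →
          -(a i) * ‖y‖ ^ 2 + ⟪b k i, y⟫ + a i * ‖x k‖ ^ 2 - ⟪b k i, x k⟫ + f i (x k) ≤ 0} ∧
        x (k + 1) ∈ O (k + 1) ∧ ∀ y ∈ O (k + 1), J (x (k + 1)) ≤ J y) ∧
      (¬ {i : Fin m | 0 < f i (x k)}.Nonempty →
        O (k + 1) = O k ∧ x (k + 1) = x k))
    (xhat : EuclideanSpace ℝ (Fin n))
    (huniq : xhat ∈ A ∧ (∀ y ∈ A, J xhat ≤ J y) ∧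
      ∀ w, w ∈ A → (∀ y ∈ A, J w ≤ J y) → w = xhat) :
    Tendsto x atTop (𝓝 xhat) :=
  stmt9_general n m f a ha hconv z J hJ A hA x O b hx0 hO0 hstep xhat huniq
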